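/- Let q be an odd prime power, d ≥ 2, and let B : F_q^d × F_q^d → F_q be a non-degenerate bilinear form. Then for any nonnegative functions f, g : F_q^d → ℝ and any λ ∈ F_q \ {0}, one has | Σ_{(x,y): B(x,y)=λ} f(x) g(y) − q^{-1} (Σ_x f(x)) (Σ_y g(y)) | ≤ q^{(d-1)/2} (Σ_x f(x)²)^{1/2} (Σ_y g(y)²)^{1/2}. -/

import Mathlib

open Finset

private lemma fiber_card_mul {V W : Type*} [AddCommGroup V] [AddCommGroup W]
    [Fintype V] [Fintype W] [DecidableEq W] (T : V →+ W)
    (hT : Function.Surjective T) (w : W) :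
    (Finset.univ.filter fun x => T x = w).card * Fintype.card W = Fintype.card V := by
  have key : ∀ w' : W, (Finset.univ.filter fun x => T x = w').card
      = (Finset.univ.filter fun x => T x = w).card := by
    intro w'
    obtain ⟨x0, hx0⟩ := hT w
    obtain ⟨x1, hx1⟩ := hT w'
    refine Finset.card_nbij' (fun x => x - x1 + x0) (fun x => x - x0 + x1) ?_ ?_ ?_ ?_
    · intro a ha
      simp only [mem_filter, mem_univ, true_and] at ha ⊢
      simp [map_add, map_sub, ha, hx0, hx1]
      simpa [sub_eq_zero] using ha
    · intro a ha
      simp only [mem_filter, mem_univ, true_and] at ha ⊢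
      simp [map_add, map_sub, ha, hx0, hx1]
      simpa [sub_eq_zero] using ha
    · intro a _; simp only [add_sub_cancel_right, sub_add_cancel]
    · intro a _; simp only [add_sub_cancel_right, sub_add_cancel]
  have h1 : Fintype.card V = ∑ w' : W, (Finset.univ.filter fun x => T x = w').card := by
    rw [← Finset.card_univ]
    exact Finset.card_eq_sum_card_fiberwise (fun x _ => Finset.mem_univ _)
  rw [h1]
  simp_rw [key]
  rw [Finset.sum_const, Finset.card_univ, smul_eq_mul, mul_comm]

private lemma pair_surj {F V : Type*} [Field F] [AddCommGroup V] [Module F V]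
    (φ ψ : V →ₗ[F] F) (v : V) (hv : φ v ≠ 0)
    (hind : ¬ ∃ c : F, ∀ x, ψ x = c * φ x) :
    Function.Surjective (fun x => (φ x, ψ x)) := by
  have hu : ∃ u, φ u = 0 ∧ ψ u ≠ 0 := by
    by_contra h
    push_neg at h
    apply hind
    refine ⟨ψ v / φ v, fun x => ?_⟩
    have hker : φ (x - (φ x / φ v) • v) = 0 := by
      simp only [map_sub, map_smul, smul_eq_mul]
      field_simp
      ring
    have h2 := h _ hker
    simp only [map_sub, map_smul, smul_eq_mul, sub_eq_zero] at h2
    rw [h2]; field_simp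
  obtain ⟨u, hu0, hu1⟩ := hu
  rintro ⟨a, b⟩
  refine ⟨(a / φ v) • v + ((b - (a / φ v) * ψ v) / ψ u) • u, ?_⟩
  simp only [map_add, map_smul, smul_eq_mul, hu0, mul_zero, add_zero, Prod.mk.injEq]
  constructor
  · field_simp
  · field_simp
    ring

set_option maxHeartbeats 2000000 in
/-- Functional distance theorem for a non-degenerate bilinear form. -/
theorem stmt2 (q d : ℕ) (hd : 2 ≤ d)
    (F : Type) [Field F] [Fintype F] [DecidableEq F]
    (hq : Fintype.card F = q) (hodd : Odd q)
    (B : (Fin d → F) →ₗ[F] (Fin d → F) →ₗ[F] F)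
    (hB : ∀ x, (∀ y, B x y = 0) → x = 0)
    (f g : (Fin d → F) → ℝ) (hf : ∀ x, 0 ≤ f x) (hg : ∀ x, 0 ≤ g x)
    (l : F) (hl : l ≠ 0) :
    |(∑ x, ∑ y, if B x y = l then f x * g y else 0) -
        (q : ℝ)⁻¹ * (∑ x, f x) * (∑ y, g y)| ≤
      (q : ℝ) ^ (((d : ℝ) - 1) / 2) *
        Real.sqrt (∑ x, f x ^ 2) * Real.sqrt (∑ y, g y ^ 2) := by
  obtain ⟨e, rfl⟩ : ∃ e, d = e + 2 := ⟨d - 2, by omega⟩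
  have hq1 : 1 ≤ q := hq ▸ Fintype.card_pos
  have hqR0 : (0:ℝ) < (q:ℝ) := by exact_mod_cast hq1
  have hqRne : (q:ℝ) ≠ 0 := ne_of_gt hqR0
  have hqR1 : (1:ℝ) ≤ (q:ℝ) := by exact_mod_cast hq1
  have cardV : Fintype.card (Fin (e+2) → F) = q ^ (e+2) := by
    simp [hq]
  -- right-nondegeneracy
  have hsepL : B.SeparatingLeft := LinearMap.separatingLeft_iff_linear_nontrivial.mpr
    (fun x hx => hB x (fun y => by rw [hx]; rfl))
  have hsepR : B.SeparatingRight := by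
    set b := Pi.basisFun F (Fin (e+2))
    have hdet : (LinearMap.toMatrix₂ b b B).det ≠ 0 :=
      (LinearMap.separatingLeft_iff_det_ne_zero b).mp hsepL
    have hMT : LinearMap.toMatrix₂ b b B.flip = (LinearMap.toMatrix₂ b b B).transpose := by
      ext i j
      simp [LinearMap.toMatrix₂_apply, LinearMap.flip_apply]
    rw [← LinearMap.flip_separatingLeft]
    apply LinearMap.separatingLeft_of_det_ne_zero b
    rw [hMT, Matrix.det_transpose]
    exact hdet
  have hB' : ∀ z, (∀ x, B x z = 0) → z = 0 := hsepR
  have hflip : ∀ z : Fin (e+2) → F, z ≠ 0 → ∃ v, B v z ≠ 0 := by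
    intro z hz
    by_contra h
    push_neg at h
    exact hz (hB' z h)
  -- counting
  set N : (Fin (e+2) → F) → ℕ := fun z => (univ.filter fun x => B x z = l).card with hNdef
  set N2 : (Fin (e+2) → F) → (Fin (e+2) → F) → ℕ :=
    fun z z' => (univ.filter fun x => B x z = l ∧ B x z' = l).card with hN2def
  have hN0 : N 0 = 0 := by
    rw [hNdef]
    rw [Finset.card_eq_zero, Finset.filter_eq_empty_iff]
    intro x _
    simp [hl.symm]
  have hNz : ∀ z, z ≠ 0 → N z = q ^ (e+1) := by
    intro z hz
    obtain ⟨v, hv⟩ := hflip z hz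
    have hsurj : Function.Surjective (B.flip z).toAddMonoidHom := by
      intro a
      refine ⟨(a / B v z) • v, ?_⟩
      show B.flip z ((a / B v z) • v) = a
      rw [map_smul, smul_eq_mul, LinearMap.flip_apply]
      field_simp
    have hcnt := fiber_card_mul (B.flip z).toAddMonoidHom hsurj l
    rw [hq, cardV] at hcnt
    have heq : (univ.filter fun x => (B.flip z).toAddMonoidHom x = l)
        = (univ.filter fun x => B x z = l) := by
      apply Finset.filter_congr
      intro x _
      simp [LinearMap.flip_apply]
    rw [heq] at hcnt
    have hq' : q ^ (e+2) = q ^ (e+1) * q := by ring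
    rw [hq'] at hcnt
    exact Nat.eq_of_mul_eq_mul_right (by omega) hcnt
  have hN2diag : ∀ z, N2 z z = N z := by
    intro z
    simp only [hN2def, hNdef]
    congr 1
    apply Finset.filter_congr
    intro x _
    simp [and_self]
  have hN2zl : ∀ z', N2 0 z' = 0 := by
    intro z'
    rw [hN2def, Finset.card_eq_zero, Finset.filter_eq_empty_iff]
    intro x _
    simp [hl.symm]
  have hN2zr : ∀ z, N2 z 0 = 0 := by
    intro z
    rw [hN2def, Finset.card_eq_zero, Finset.filter_eq_empty_iff]
    intro x _
    simp [hl.symm]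
  have hN2smul : ∀ (z : Fin (e+2) → F) (c : F), c ≠ 1 → N2 z (c • z) = 0 := by
    intro z c hc
    rw [hN2def, Finset.card_eq_zero, Finset.filter_eq_empty_iff]
    intro x _
    rintro ⟨h1, h2⟩
    rw [map_smul, smul_eq_mul, h1] at h2
    exact hc (mul_right_cancel₀ hl (by rw [h2, one_mul]))
  have hN2indep : ∀ z z', z ≠ 0 → (¬ ∃ c : F, z' = c • z) → N2 z z' = q ^ e := by
    intro z z' hz hcz
    obtain ⟨v, hv⟩ := hflip z hz
    have hind : ¬ ∃ c : F, ∀ x, (B.flip z') x = c * (B.flip z) x := by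
      rintro ⟨c, hc⟩
      apply hcz
      refine ⟨c, ?_⟩
      have : ∀ x, B x (z' - c • z) = 0 := by
        intro x
        have := hc x
        simp only [LinearMap.flip_apply] at this
        rw [map_sub, map_smul, smul_eq_mul, this]
        ring
      have h0 := hB' _ this
      rw [sub_eq_zero] at h0
      exact h0
    have hsurj : Function.Surjective (LinearMap.prod (B.flip z) (B.flip z')).toAddMonoidHom :=
      pair_surj (B.flip z) (B.flip z') v (by simpa [LinearMap.flip_apply] using hv) hind
    have hcnt := fiber_card_mul (LinearMap.prod (B.flip z) (B.flip z')).toAddMonoidHom hsurj (l, l)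
    rw [cardV] at hcnt
    have hcardFF : Fintype.card (F × F) = q * q := by simp [hq]
    rw [hcardFF] at hcnt
    have heq : (univ.filter fun x => (LinearMap.prod (B.flip z) (B.flip z')).toAddMonoidHom x = (l, l))
        = (univ.filter fun x => B x z = l ∧ B x z' = l) := by
      apply Finset.filter_congr
      intro x _
      simp [LinearMap.prod_apply, Prod.ext_iff, LinearMap.flip_apply, Pi.prod]
    rw [heq] at hcnt
    have hq' : q ^ (e+2) = q ^ e * (q * q) := by ring
    rw [hq'] at hcnt
    exact Nat.eq_of_mul_eq_mul_right (by positivity) hcnt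
  -- analytic part
  set K : (Fin (e+2) → F) → (Fin (e+2) → F) → ℝ :=
    fun x z => (if B x z = l then (1:ℝ) else 0) - (q:ℝ)⁻¹ with hKdef
  set E : (Fin (e+2) → F) → ℝ := fun x => ∑ z, g z * K x z with hEdef
  have key1 : (q:ℝ)⁻¹ * (q:ℝ)^(e+1) = (q:ℝ)^e := by
    field_simp
    ring
  have key2 : (q:ℝ)^(e+2) * ((q:ℝ)⁻¹ * (q:ℝ)⁻¹) = (q:ℝ)^e := by
    field_simp
    ring
  have hqe0 : (0:ℝ) ≤ (q:ℝ)^e := by positivity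
  -- Step A : rewrite LHS
  have hA : (∑ x, ∑ y, if B x y = l then f x * g y else 0) -
      (q:ℝ)⁻¹ * (∑ x, f x) * (∑ y, g y) = ∑ x, f x * E x := by
    have h1 : ∀ x, f x * E x
        = (∑ y, if B x y = l then f x * g y else 0) - (q:ℝ)⁻¹ * (f x * ∑ y, g y) := by
      intro x
      simp only [hEdef, hKdef]
      rw [Finset.mul_sum, Finset.mul_sum, Finset.mul_sum, ← Finset.sum_sub_distrib]
      refine Finset.sum_congr rfl fun y _ => ?_
      split_ifs <;> ring
    simp_rw [h1]
    rw [Finset.sum_sub_distrib, ← Finset.mul_sum, ← Finset.sum_mul]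
    ring
  -- Step C : expand sum of E^2
  have hC : ∑ x, E x ^ 2 = ∑ y, ∑ y', (g y * g y') * (∑ x, K x y * K x y') := by
    simp only [hEdef, sq]
    simp_rw [Finset.sum_mul_sum]
    rw [Finset.sum_comm]
    refine Finset.sum_congr rfl fun y _ => ?_
    rw [Finset.sum_comm]
    refine Finset.sum_congr rfl fun y' _ => ?_
    rw [Finset.mul_sum]
    refine Finset.sum_congr rfl fun x _ => ?_
    ring
  -- Step D : value of the kernel correlation
  have hCval : ∀ y y', (∑ x, K x y * K x y')
      = (N2 y y' : ℝ) - (q:ℝ)⁻¹ * (N y : ℝ) - (q:ℝ)⁻¹ * (N y' : ℝ)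
        + (q:ℝ)^(e+2) * ((q:ℝ)⁻¹ * (q:ℝ)⁻¹) := by
    intro y y'
    have hpt : ∀ x, K x y * K x y'
        = (if B x y = l ∧ B x y' = l then (1:ℝ) else 0)
          - (q:ℝ)⁻¹ * (if B x y = l then (1:ℝ) else 0)
          - (q:ℝ)⁻¹ * (if B x y' = l then (1:ℝ) else 0)
          + (q:ℝ)⁻¹ * (q:ℝ)⁻¹ := by
      intro x
      simp only [hKdef]
      by_cases h1 : B x y = l <;> by_cases h2 : B x y' = l <;> simp [h1, h2] <;> ring
    simp_rw [hpt]
    rw [Finset.sum_add_distrib, Finset.sum_sub_distrib, Finset.sum_sub_distrib,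
      ← Finset.mul_sum, ← Finset.mul_sum, Finset.sum_boole, Finset.sum_boole, Finset.sum_boole,
      Finset.sum_const, Finset.card_univ, cardV, nsmul_eq_mul]
    push_cast
    all_goals simp only [hNdef, hN2def]
    all_goals ring
  -- Step D' : pointwise bound
  have hCle : ∀ y y', (∑ x, K x y * K x y') ≤ (if y = y' then (q:ℝ)^(e+1) else 0) := by
    intro y y'
    rw [hCval]
    by_cases hyy : y = y'
    · subst hyy
      rw [if_pos rfl, hN2diag]
      by_cases hy : y = 0
      · subst hy
        rw [hN0]
        push_cast
        rw [key2]
        have : (q:ℝ)^e ≤ (q:ℝ)^(e+1) := pow_le_pow_right₀ hqR1 (by omega)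
        nlinarith
      · rw [hNz y hy]
        push_cast
        rw [key2]
        nlinarith [key1]
    · rw [if_neg hyy]
      by_cases hy : y = 0
      · subst hy
        rw [hN0, hN2zl, hNz y' (fun h => hyy h.symm)]
        push_cast
        rw [key2]
        nlinarith [key1]
      · by_cases hy' : y' = 0
        · subst hy'
          rw [hN0, hN2zr, hNz y hy]
          push_cast
          rw [key2]
          nlinarith [key1]
        · by_cases hdep : ∃ c : F, y' = c • y
          · obtain ⟨c, rfl⟩ := hdep
            have hc1 : c ≠ 1 := by
              intro h
              subst h
              simp at hyy
            rw [hN2smul y c hc1, hNz y hy, hNz _ hy']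
            push_cast
            rw [key2]
            nlinarith [key1]
          · rw [hN2indep y y' hy hdep, hNz y hy, hNz y' hy']
            push_cast
            rw [key2]
            nlinarith [key1]
  -- Step E : sum bound
  have hEsum : ∑ x, E x ^ 2 ≤ (q:ℝ)^(e+1) * ∑ y, g y ^ 2 := by
    rw [hC]
    calc ∑ y, ∑ y', (g y * g y') * (∑ x, K x y * K x y')
        ≤ ∑ y, ∑ y', (g y * g y') * (if y = y' then (q:ℝ)^(e+1) else 0) := by
          apply Finset.sum_le_sum
          intro y _
          apply Finset.sum_le_sum
          intro y' _
          exact mul_le_mul_of_nonneg_left (hCle y y') (mul_nonneg (hg y) (hg y'))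
      _ = ∑ y, g y ^ 2 * (q:ℝ)^(e+1) := by
          refine Finset.sum_congr rfl fun y _ => ?_
          simp_rw [mul_ite, mul_zero]
          rw [Finset.sum_ite_eq]
          simp only [Finset.mem_univ, if_true]
          ring
      _ = (q:ℝ)^(e+1) * ∑ y, g y ^ 2 := by
          rw [← Finset.sum_mul]
          ring
  -- final assembly
  rw [hA]
  have hCS := Finset.sum_mul_sq_le_sq_mul_sq univ f E
  have habs : |∑ x, f x * E x| ≤ Real.sqrt (∑ x, f x ^ 2) * Real.sqrt (∑ x, E x ^ 2) := by
    have h0 : (0:ℝ) ≤ ∑ x, f x ^ 2 := by positivity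
    rw [← Real.sqrt_sq_eq_abs, ← Real.sqrt_mul h0]
    exact Real.sqrt_le_sqrt hCS
  refine habs.trans ?_
  have h2 : Real.sqrt (∑ x, E x ^ 2) ≤ Real.sqrt ((q:ℝ)^(e+1) * ∑ y, g y ^ 2) :=
    Real.sqrt_le_sqrt hEsum
  have h3 : Real.sqrt ((q:ℝ)^(e+1) * ∑ y, g y ^ 2)
      = Real.sqrt ((q:ℝ)^(e+1)) * Real.sqrt (∑ y, g y ^ 2) :=
    Real.sqrt_mul (by positivity) _
  have hpow : (q:ℝ) ^ (((((e:ℕ)+2 : ℕ) : ℝ) - 1) / 2) = Real.sqrt ((q:ℝ)^(e+1)) := by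
    rw [Real.sqrt_eq_rpow, ← Real.rpow_natCast (q:ℝ) (e+1), ← Real.rpow_mul hqR0.le]
    congr 1
    push_cast
    ring
  calc Real.sqrt (∑ x, f x ^ 2) * Real.sqrt (∑ x, E x ^ 2)
      ≤ Real.sqrt (∑ x, f x ^ 2) * (Real.sqrt ((q:ℝ)^(e+1)) * Real.sqrt (∑ y, g y ^ 2)) := by
        rw [← h3]
        exact mul_le_mul_of_nonneg_left h2 (Real.sqrt_nonneg _)
    _ = (q:ℝ) ^ (((((e:ℕ)+2 : ℕ) : ℝ) - 1) / 2) * Real.sqrt (∑ x, f x ^ 2)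
          * Real.sqrt (∑ y, g y ^ 2) := by
        rw [hpow]
        ring
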